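/- (Star duality for 𝒜-finite multiple zeta-star values, Hoffman, Jarossay.) For every element w of 𝔥y, one has Z_𝒜⋆(w) = −Z_𝒜⋆(α̃(w)). -/

import Mathlib

/-!
Write `w = u y` with `u` a word in `x, y`. For each prime `p`, the `p`-component of `ζ_𝒜⋆(u y)` is
`∑_{m=1}^{p-1} φ_u(m)`, where `φ` is built from `m ↦ 1/m` by letting each `x` act as
`f ↦ (m ↦ f(m)/m)` and each `y` as `f ↦ (m ↦ (1/m) ∑_{j ≤ m} f(j))`. For the binomial transform
`T_N f = ∑_{m=1}^N (-1)^{m+1} C(N, m) f(m)` one has `T_N (f/m) = ∑_{M ≤ N} (T_M f)/M` and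
`T_M (∑_{j ≤ ·} f(j)) = T_M f - T_{M-1} f`, so under `T` the letters `x` and `y` exchange roles, and
induction on `u` gives Hoffman's identity `T_N φ_u = ∑_{m=1}^N φ_{α(u)}(m)` whenever `1, …, N` are
invertible. At `N = p - 1` one has `C(p - 1, m) ≡ (-1)^m (mod p)`, so the left side is
`-∑_{m=1}^{p-1} φ_u(m)`: the duality holds exactly for every prime, hence in `𝒜`.
-/

noncomputable section

namespace FMZVNote

/-- The noncommutative polynomial ring `𝔥 = ℚ⟨x,y⟩` in two indeterminates `x`, `y`. -/
abbrev H : Type := FreeAlgebra ℚ (Fin 2)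

/-- The generator `x`. -/
def x : H := FreeAlgebra.ι ℚ 0

/-- The generator `y`. -/
def y : H := FreeAlgebra.ι ℚ 1

/-- `z = x + y`. -/
def z : H := x + y

/-- `z_k = x^{k-1} y`. -/
def zk (k : ℕ) : H := x ^ (k - 1) * y

/-- The word `z_{k_1} ⋯ z_{k_r}` associated to an index `(k_1, …, k_r)`. -/
def zword (ks : List ℕ) : H := (ks.map zk).prod

/-- The ideal `⊕_p ℤ/pℤ` of finitely supported elements of `∏_p ℤ/pℤ`. -/
def finSupportIdeal : Ideal (∀ p : Nat.Primes, ZMod p) where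
  carrier := {f | {p : Nat.Primes | f p ≠ 0}.Finite}
  zero_mem' := by simp
  add_mem' := by
    intro a b ha hb
    refine (ha.union hb).subset ?_
    intro p hp
    simp only [Set.mem_setOf_eq, Set.mem_union]
    by_contra h
    push_neg at h
    exact hp (by simp [h.1, h.2])
  smul_mem' := by
    intro c f hf
    refine hf.subset ?_
    intro p hp
    simp only [Set.mem_setOf_eq] at hp ⊢
    intro h
    exact hp (by simp [h])

/-- The ring `𝒜 = (∏_p ℤ/pℤ)/(⊕_p ℤ/pℤ)`, where `p` runs over all primes. -/
abbrev Acal : Type := (∀ p : Nat.Primes, ZMod p) ⧸ finSupportIdeal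

theorem Acal.isUnit_intCast (n : ℤ) (hn : n ≠ 0) : IsUnit ((n : ℤ) : Acal) := by
  refine IsUnit.of_mul_eq_one
    (Ideal.Quotient.mk finSupportIdeal fun p => ((n : ZMod p))⁻¹) ?_
  have h1 : ((n : ℤ) : Acal)
      = Ideal.Quotient.mk finSupportIdeal (fun p => ((n : ZMod p))) := by
    rw [← map_intCast (Ideal.Quotient.mk finSupportIdeal) n]
    rfl
  rw [h1, ← map_mul, ← map_one (Ideal.Quotient.mk finSupportIdeal), Ideal.Quotient.eq]
  have hfin : {p : Nat.Primes | ((n : ZMod (p : ℕ))) = 0}.Finite := by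
    have hsub : {p : Nat.Primes | ((n : ZMod (p : ℕ))) = 0} ⊆
        (fun p : Nat.Primes => (p : ℕ)) ⁻¹' (Set.Iic n.natAbs) := by
      intro p hp
      simp only [Set.mem_setOf_eq] at hp
      haveI : NeZero (p : ℕ) := ⟨p.2.ne_zero⟩
      rw [ZMod.intCast_zmod_eq_zero_iff_dvd] at hp
      have hd : (p : ℕ) ∣ n.natAbs := by
        have := Int.natAbs_dvd_natAbs.mpr hp
        simpa using this
      exact Nat.le_of_dvd (Int.natAbs_pos.mpr hn) hd
    exact ((Set.finite_Iic _).preimage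
      (fun a _ b _ h => Subtype.ext h)).subset hsub
  refine hfin.subset ?_
  intro p hp
  simp only [Set.mem_setOf_eq] at hp ⊢
  by_contra h
  apply hp
  haveI : Fact (p : ℕ).Prime := ⟨p.2⟩
  simp [mul_inv_cancel₀ h]

/-- Every nonzero integer is invertible in `𝒜`, so `𝒜` is a `ℚ`-algebra. -/
instance : Algebra ℚ Acal :=
  (IsLocalization.lift (M := nonZeroDivisors ℤ) (S := ℚ)
    (g := Int.castRingHom Acal)
    (fun v => Acal.isUnit_intCast v.1 (nonZeroDivisors.ne_zero v.2))).toAlgebra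

instance : Module ℚ Acal := Algebra.toModule

/-- The finite multiple zeta-star value `ζ_𝒜⋆(k_1,…,k_r)`, the class in `𝒜` of the tuple
`(Σ_{p>n_1≥⋯≥n_r≥1} 1/(n_1^{k_1}⋯n_r^{k_r}) mod p)_p`. -/
def zetaAStar (k : List ℕ) : Acal :=
  Ideal.Quotient.mk finSupportIdeal fun p =>
    ∑ n : Fin k.length → Fin p,
      if (∀ i, 0 < (n i : ℕ)) ∧
          (∀ i j : Fin k.length, i < j → (n j : ℕ) ≤ (n i : ℕ)) then
        ∏ i, ((((n i : ℕ) : ZMod p)) ^ k.get i)⁻¹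
      else 0

/-- The automorphism `α` of `𝔥` interchanging `x` and `y`. -/
def alphaHom : H →ₐ[ℚ] H := FreeAlgebra.lift ℚ ![y, x]

open Finset

section BinomialTransform

variable {R : Type*} [CommRing R]

def binomialTransform (f : ℕ → R) (N : ℕ) : R :=
  ∑ m ∈ Icc 1 N, (-1) ^ (m + 1) * (N.choose m : R) * f m

theorem sum_Icc_neg_one_pow_mul_choose {n j : ℕ} (hj : 1 ≤ j) (hjn : j ≤ n + 1) :
    ∑ m ∈ Icc j (n + 1), (-1 : R) ^ (m + 1) * ((n + 1).choose m : R)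
      = (-1) ^ (j + 1) * (n.choose (j - 1) : R) := by
  obtain ⟨k, rfl⟩ := Nat.exists_eq_add_of_le' hj
  have hℤ : ∑ m ∈ Ico (k + 1) (n + 1 + 1), ((-1) ^ m * (n + 1).choose m : ℤ)
      = -((-1) ^ k * n.choose k) := by
    rw [sum_Ico_eq_sub _ (by omega), Int.alternating_sum_range_choose_eq_choose,
      Int.alternating_sum_range_choose_eq_choose, Nat.choose_succ_self]
    ring
  have hR := congrArg (Int.cast : ℤ → R) hℤ
  push_cast at hR
  rw [← Ico_add_one_right_eq_Icc, Nat.add_sub_cancel]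
  simp only [pow_succ, mul_neg_one, neg_mul, sum_neg_distrib, hR, neg_neg]

theorem binomialTransform_const_one {N : ℕ} (hN : 1 ≤ N) :
    binomialTransform (fun _ => (1 : R)) N = 1 := by
  obtain ⟨n, rfl⟩ := Nat.exists_eq_add_of_le' hN
  simp only [binomialTransform, mul_one]
  rw [sum_Icc_neg_one_pow_mul_choose le_rfl hN]
  simp

theorem binomialTransform_sum_Icc (f : ℕ → R) (M : ℕ) :
    binomialTransform (fun m => ∑ j ∈ Icc 1 m, f j) (M + 1)
      = binomialTransform f (M + 1) - binomialTransform f M := by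
  have hswap : binomialTransform (fun m => ∑ j ∈ Icc 1 m, f j) (M + 1)
      = ∑ j ∈ Icc 1 (M + 1),
          (∑ m ∈ Icc j (M + 1), (-1) ^ (m + 1) * ((M + 1).choose m : R)) * f j := by
    simp only [binomialTransform, mul_sum, sum_mul]
    exact sum_comm' fun m j => by simp only [mem_Icc]; omega
  have hextend : binomialTransform f M
      = ∑ j ∈ Icc 1 (M + 1), (-1) ^ (j + 1) * (M.choose j : R) * f j := by
    simp [binomialTransform, sum_Icc_succ_top]
  rw [hswap, hextend, binomialTransform, ← sum_sub_distrib]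
  refine sum_congr rfl fun j hj => ?_
  obtain ⟨hj1, hjM⟩ := mem_Icc.1 hj
  obtain ⟨k, rfl⟩ := Nat.exists_eq_add_of_le' hj1
  rw [sum_Icc_neg_one_pow_mul_choose hj1 hjM, Nat.choose_succ_succ', Nat.add_sub_cancel]
  push_cast
  ring

theorem binomialTransform_sub_one_eq_neg_sum (p : ℕ) [hp : Fact p.Prime] [CharP R p] (f : ℕ → R) :
    binomialTransform f (p - 1) = -∑ m ∈ Icc 1 (p - 1), f m := by
  have hchoose : ∀ m, m ≤ p - 1 → ((p - 1).choose m : R) = (-1) ^ m := by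
    intro m hm
    induction m with
    | zero => simp
    | succ m ih =>
      have hpascal : ((p - 1).choose m + (p - 1).choose (m + 1) : R) = 0 := by
        rw [← Nat.cast_add, ← Nat.choose_succ_succ', Nat.sub_add_cancel hp.out.one_le,
          CharP.cast_eq_zero_iff R p]
        exact hp.out.dvd_choose_self (by omega) (by omega)
      rw [ih (by omega)] at hpascal
      linear_combination hpascal
  rw [binomialTransform, ← sum_neg_distrib]
  refine sum_congr rfl fun m hm => ?_
  rw [hchoose m (mem_Icc.1 hm).2, ← pow_add, (show Odd (m + 1 + m) from ⟨m, by ring⟩).neg_one_pow]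
  ring

end BinomialTransform

/-- Words in `x, y` are lists over `Fin 2` (`0 ↦ x`, `1 ↦ y`). `wordIndex u = (k₁, [k₂, …, k_r])`
where `u y = z_{k₁} ⋯ z_{k_r}`; the first entry is kept apart because a leading `x` raises it. -/
def wordIndex : List (Fin 2) → ℕ × List ℕ
  | [] => (1, [])
  | 0 :: u => ((wordIndex u).1 + 1, (wordIndex u).2)
  | 1 :: u => (1, (wordIndex u).1 :: (wordIndex u).2)

def indexOf (u : List (Fin 2)) : List ℕ := (wordIndex u).1 :: (wordIndex u).2

theorem one_le_of_mem_indexOf : ∀ (u : List (Fin 2)), ∀ k ∈ indexOf u, 1 ≤ k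
  | [] => by simp [indexOf, wordIndex]
  | 0 :: u => by
    have := one_le_of_mem_indexOf u
    simp_all [indexOf, wordIndex]
  | 1 :: u => by
    have := one_le_of_mem_indexOf u
    simp_all [indexOf, wordIndex]

theorem sum_fin_ite_Icc {M : Type*} [AddCommMonoid M] {q b : ℕ} (hb : b < q) (g : ℕ → M) :
    ∑ m : Fin q, (if 1 ≤ (m : ℕ) ∧ (m : ℕ) ≤ b then g m else 0) = ∑ m ∈ Icc 1 b, g m := by
  rw [Fin.sum_univ_eq_sum_range (fun m => if 1 ≤ m ∧ m ≤ b then g m else 0), ← sum_filter]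
  congr 1
  ext m
  simp only [mem_filter, mem_range, mem_Icc]
  omega

section StarSum

/- A bare `Inv` suffices here, so that the lemmas apply to `ZMod p` for every `p`, as in
`zetaAStar`. -/
variable {K : Type*} [CommRing K] [Inv K]

/-- `starSum [k₁, …, k_r] b = ∑_{b ≥ n₁ ≥ ⋯ ≥ n_r ≥ 1} 1 / (n₁^{k₁} ⋯ n_r^{k_r})`. -/
def starSum : List ℕ → ℕ → K
  | [], _ => 1
  | k :: ks, b => ∑ m ∈ Icc 1 b, ((m : K) ^ k)⁻¹ * starSum ks m

def IsStarTuple {r q : ℕ} (n : Fin r → Fin q) (b : ℕ) : Prop :=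
  (∀ i, 0 < (n i : ℕ)) ∧ (∀ i j, i < j → (n j : ℕ) ≤ (n i : ℕ)) ∧ ∀ i, (n i : ℕ) ≤ b

instance {r q : ℕ} (n : Fin r → Fin q) (b : ℕ) : Decidable (IsStarTuple n b) := by
  unfold IsStarTuple
  infer_instance

theorem isStarTuple_cons {r q b : ℕ} (m : Fin q) (t : Fin r → Fin q) :
    IsStarTuple (Fin.cons m t : Fin (r + 1) → Fin q) b
      ↔ (1 ≤ (m : ℕ) ∧ (m : ℕ) ≤ b) ∧ IsStarTuple t m := by
  simp only [IsStarTuple, Fin.forall_fin_succ, Fin.cons_zero, Fin.cons_succ, Fin.succ_lt_succ_iff,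
    Fin.succ_pos, Fin.not_lt_zero, false_implies, true_implies, true_and]
  grind

theorem sum_isStarTuple_eq_starSum {q : ℕ} : ∀ (ks : List ℕ) {b : ℕ}, b < q →
    ∑ n : Fin ks.length → Fin q,
        (if IsStarTuple n b then ∏ i, (((n i : ℕ) : K) ^ ks.get i)⁻¹ else 0)
      = starSum ks b
  | [], b, _ => by simp [IsStarTuple, starSum]
  | k :: ks, b, hb => by
    -- `(k :: ks).length` is `ks.length + 1` only up to unfolding, which `Fin.consEquiv` needs
    change ∑ n : Fin (ks.length + 1) → Fin q,
      (if IsStarTuple n b then ∏ i, (((n i : ℕ) : K) ^ (k :: ks).get i)⁻¹ else 0) = _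
    rw [← (Fin.consEquiv fun _ => Fin q).sum_comp, Fintype.sum_prod_type, starSum,
      ← sum_fin_ite_Icc hb]
    refine sum_congr rfl fun m _ => ?_
    dsimp only [Fin.consEquiv, Equiv.coe_fn_mk]
    simp only [isStarTuple_cons, ite_and, Fin.prod_univ_succ, Fin.cons_zero, Fin.cons_succ,
      List.get_cons_zero, ← sum_isStarTuple_eq_starSum ks m.isLt]
    split_ifs
    · simp only [mul_sum, mul_ite, mul_zero]
      rfl
    all_goals exact sum_const_zero

end StarSum

section Field

variable {K : Type*} [Field K]

theorem sum_Icc_inv_mul_choose {m N : ℕ} (hm : 1 ≤ m) (hmN : m ≤ N)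
    (hN : ∀ j ∈ Icc 1 N, (j : K) ≠ 0) :
    ∑ M ∈ Icc m N, (M : K)⁻¹ * M.choose m = (m : K)⁻¹ * N.choose m := by
  induction N, hmN using Nat.le_induction with
  | base => simp
  | succ N hmN ih =>
    obtain ⟨k, rfl⟩ := Nat.exists_eq_add_of_le' hm
    have hN1 : ((N + 1 : ℕ) : K) ≠ 0 := hN (N + 1) (by simp only [mem_Icc]; omega)
    have hk1 : ((k + 1 : ℕ) : K) ≠ 0 := hN (k + 1) (by simp only [mem_Icc]; omega)
    have hterm : ((N + 1 : ℕ) : K)⁻¹ * (N + 1).choose (k + 1) = ((k + 1 : ℕ) : K)⁻¹ * N.choose k := by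
      rw [inv_mul_eq_div, inv_mul_eq_div, div_eq_div_iff hN1 hk1]
      norm_cast
      exact congrArg Nat.cast ((Nat.add_one_mul_choose_eq N k).symm.trans (Nat.mul_comm _ _))
    rw [sum_Icc_succ_top (by omega), ih fun j hj => hN j (by simp only [mem_Icc] at hj ⊢; omega),
      hterm, Nat.choose_succ_succ' N k]
    push_cast
    ring

theorem binomialTransform_inv_mul (f : ℕ → K) {N : ℕ} (hN : ∀ j ∈ Icc 1 N, (j : K) ≠ 0) :
    binomialTransform (fun m => (m : K)⁻¹ * f m) N
      = ∑ M ∈ Icc 1 N, (M : K)⁻¹ * binomialTransform f M := by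
  have hswap : ∑ M ∈ Icc 1 N, (M : K)⁻¹ * binomialTransform f M
      = ∑ m ∈ Icc 1 N, (-1) ^ (m + 1) * f m * ∑ M ∈ Icc m N, (M : K)⁻¹ * M.choose m := by
    simp only [binomialTransform, mul_sum]
    rw [sum_comm' (t' := Icc 1 N) (s' := fun m => Icc m N) fun M m => by simp only [mem_Icc]; omega]
    exact sum_congr rfl fun m _ => sum_congr rfl fun M _ => by ring
  rw [hswap, binomialTransform]
  refine sum_congr rfl fun m hm => ?_
  rw [sum_Icc_inv_mul_choose (mem_Icc.1 hm).1 (mem_Icc.1 hm).2 hN]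
  ring

def starTerm : List (Fin 2) → ℕ → K
  | [], m => (m : K)⁻¹
  | 0 :: s, m => (m : K)⁻¹ * starTerm s m
  | 1 :: s, m => (m : K)⁻¹ * ∑ j ∈ Icc 1 m, starTerm s j

theorem binomialTransform_starTerm : ∀ (s : List (Fin 2)) {N : ℕ},
    (∀ j ∈ Icc 1 N, (j : K) ≠ 0) →
    binomialTransform (starTerm (K := K) s) N = ∑ m ∈ Icc 1 N, starTerm (s.map Fin.rev) m
  | [], N, hN => by
    have h := binomialTransform_inv_mul (fun _ => (1 : K)) hN
    simp only [mul_one] at h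
    refine h.trans (sum_congr rfl fun M hM => ?_)
    rw [binomialTransform_const_one (mem_Icc.1 hM).1, mul_one]
    rfl
  | 0 :: s, N, hN => by
    refine (binomialTransform_inv_mul _ hN).trans (sum_congr rfl fun M hM => ?_)
    rw [binomialTransform_starTerm s fun j hj => hN j (Icc_subset_Icc_right (mem_Icc.1 hM).2 hj)]
    rfl
  | 1 :: s, N, hN => by
    refine (binomialTransform_inv_mul _ hN).trans (sum_congr rfl fun M hM => ?_)
    obtain ⟨M, rfl⟩ := Nat.exists_eq_add_of_le' (mem_Icc.1 hM).1
    have hM : ∀ j ∈ Icc 1 (M + 1), (j : K) ≠ 0 :=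
      fun j hj => hN j (Icc_subset_Icc_right (mem_Icc.1 hM).2 hj)
    rw [binomialTransform_sum_Icc, binomialTransform_starTerm s hM,
      binomialTransform_starTerm s fun j hj => hM j (Icc_subset_Icc_right (by omega) hj),
      sum_Icc_succ_top (by omega), add_sub_cancel_left]
    rfl

theorem sum_Icc_starTerm_add_sum_Icc_starTerm_rev (p : ℕ) [Fact p.Prime] [CharP K p]
    (s : List (Fin 2)) :
    ∑ m ∈ Icc 1 (p - 1), starTerm (K := K) s m + ∑ m ∈ Icc 1 (p - 1), starTerm (s.map Fin.rev) m
      = 0 := by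
  have hunit : ∀ j ∈ Icc 1 (p - 1), (j : K) ≠ 0 := by
    intro j hj hj0
    obtain ⟨hj1, hjp⟩ := mem_Icc.1 hj
    have := Nat.le_of_dvd hj1 ((CharP.cast_eq_zero_iff K p j).1 hj0)
    omega
  have h := binomialTransform_starTerm s hunit
  rw [binomialTransform_sub_one_eq_neg_sum] at h
  linear_combination -h

theorem starTerm_eq_inv_pow_mul_starSum : ∀ (u : List (Fin 2)) (m : ℕ),
    starTerm u m = ((m : K) ^ (wordIndex u).1)⁻¹ * starSum (wordIndex u).2 m
  | [], m => by simp [starTerm, wordIndex, starSum]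
  | 0 :: u, m => by
    rw [starTerm, starTerm_eq_inv_pow_mul_starSum u, wordIndex, pow_succ, mul_inv_rev, mul_assoc]
  | 1 :: u, m => by
    simp only [starTerm, wordIndex, starSum, pow_one, starTerm_eq_inv_pow_mul_starSum u]

theorem sum_Icc_starTerm (u : List (Fin 2)) (b : ℕ) :
    ∑ m ∈ Icc 1 b, starTerm (K := K) u m = starSum (indexOf u) b :=
  sum_congr rfl fun m _ => starTerm_eq_inv_pow_mul_starSum u m

end Field

theorem zetaAStar_eq_mk_starSum (ks : List ℕ) :
    zetaAStar ks = Ideal.Quotient.mk finSupportIdeal fun p => starSum ks ((p : ℕ) - 1) := by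
  unfold zetaAStar
  congr 1
  funext p
  rw [← sum_isStarTuple_eq_starSum ks (Nat.sub_lt p.2.pos one_pos)]
  refine sum_congr rfl fun n _ => if_congr ?_ rfl rfl
  exact (and_iff_left fun i => Nat.le_sub_one_of_lt (n i).isLt).symm.trans and_assoc

theorem zetaAStar_indexOf_add_zetaAStar_indexOf_rev (u : List (Fin 2)) :
    zetaAStar (indexOf u) + zetaAStar (indexOf (u.map Fin.rev)) = 0 := by
  rw [zetaAStar_eq_mk_starSum, zetaAStar_eq_mk_starSum, ← map_add,
    ← map_zero (Ideal.Quotient.mk finSupportIdeal)]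
  congr 1
  funext p
  have : Fact (p : ℕ).Prime := ⟨p.2⟩
  rw [Pi.add_apply, ← sum_Icc_starTerm, ← sum_Icc_starTerm]
  exact sum_Icc_starTerm_add_sum_Icc_starTerm_rev (p : ℕ) u

theorem basisFreeMonoid_apply {R X : Type*} [CommSemiring R] (w : FreeMonoid X) :
    FreeAlgebra.basisFreeMonoid R X w = (w.toList.map (FreeAlgebra.ι R)).prod := by
  simp [FreeAlgebra.basisFreeMonoid, FreeAlgebra.equivMonoidAlgebraFreeMonoid,
    MonoidAlgebra.lift_single, FreeMonoid.lift_apply]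

theorem alphaHom_prod_map_ι (u : List (Fin 2)) :
    alphaHom (u.map (FreeAlgebra.ι ℚ)).prod = ((u.map Fin.rev).map (FreeAlgebra.ι ℚ)).prod := by
  rw [map_list_prod, List.map_map, List.map_map]
  congr 1
  refine List.map_congr_left fun i _ => ?_
  fin_cases i <;> simp [alphaHom, x, y]

theorem prod_map_ι_mul_y : ∀ u : List (Fin 2),
    (u.map (FreeAlgebra.ι ℚ)).prod * y = zword (indexOf u)
  | [] => by simp [indexOf, wordIndex, zword, zk]
  | 0 :: u => by
    obtain ⟨k, hk⟩ := Nat.exists_eq_add_of_le'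
      (one_le_of_mem_indexOf u _ List.mem_cons_self)
    rw [List.map_cons, List.prod_cons, mul_assoc, prod_map_ι_mul_y u]
    simp only [indexOf, wordIndex, zword, List.map_cons, List.prod_cons, hk, zk,
      Nat.add_sub_cancel, pow_succ', mul_assoc]
    rfl
  | 1 :: u => by
    rw [List.map_cons, List.prod_cons, mul_assoc, prod_map_ι_mul_y u]
    simp [indexOf, wordIndex, zword, zk, y]

theorem star_duality_fmzv_A_general
    (Zs : H →ₗ[ℚ] Acal)
    (hZs : ∀ ks : List ℕ, (∀ k ∈ ks, 1 ≤ k) → Zs (zword ks) = zetaAStar ks)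
    (alphaTilde : H →ₗ[ℚ] H)
    (halphaTilde : ∀ u : H, alphaTilde (u * y) = alphaHom u * y)
    (w : H) (v : H) (hw : w = v * y) :
    Zs w = -Zs (alphaTilde w) := by
  have hword : ∀ u : List (Fin 2), Zs ((u.map (FreeAlgebra.ι ℚ)).prod * y)
      = -Zs (alphaHom (u.map (FreeAlgebra.ι ℚ)).prod * y) := fun u => by
    rw [alphaHom_prod_map_ι, prod_map_ι_mul_y, prod_map_ι_mul_y, hZs _ (one_le_of_mem_indexOf _),
      hZs _ (one_le_of_mem_indexOf _)]
    exact eq_neg_of_add_eq_zero_left (zetaAStar_indexOf_add_zetaAStar_indexOf_rev u)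
  have hlinear : Zs ∘ₗ LinearMap.mulRight ℚ y
      = -(Zs ∘ₗ LinearMap.mulRight ℚ y ∘ₗ alphaHom.toLinearMap) :=
    (FreeAlgebra.basisFreeMonoid ℚ (Fin 2)).ext fun w => by
      simpa [basisFreeMonoid_apply] using hword w.toList
  rw [hw, halphaTilde]
  exact LinearMap.congr_fun hlinear v

/-- **Star duality for `𝒜`-finite multiple zeta-star values** (Hoffman, Jarossay).
For every `w ∈ 𝔥y`, one has `Z_𝒜⋆(w) = −Z_𝒜⋆(α̃(w))`. -/
theorem star_duality_fmzv_A
    (Zs : H →ₗ[ℚ] Acal) (hZsone : Zs 1 = 1)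
    (hZs : ∀ ks : List ℕ, (∀ k ∈ ks, 1 ≤ k) → Zs (zword ks) = zetaAStar ks)
    (alphaTilde : H →ₗ[ℚ] H)
    (halphaTilde : ∀ u : H, alphaTilde (u * y) = alphaHom u * y)
    (w : H) (v : H) (hw : w = v * y) :
    Zs w = -Zs (alphaTilde w) :=
  star_duality_fmzv_A_general Zs hZs alphaTilde halphaTilde w v hw

end FMZVNote
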